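/- arXiv:1207.5447 — 2 statements merged into one kernel-verified Lean document; each statement's English description precedes it below -/
import Mathlib

section
/- Let (T, D(T)) be a closed antisymmetric densely defined operator on a Hilbert space H and P an orthogonal projection with P(D) ⊂ D(T) for a dense subspace D ⊂ D(T), and assume PTP = 0 on D. Define B = (I + (TP)*TP)^{-1}(TP)* on D((TP)*). Then for all f ∈ D, ‖Bf‖ ≤ (1/2)‖(I − P)f‖. -/
/-!
Write `S = TP` and `u = Bf`. Antisymmetry of `T` and symmetry of `P` give
`⟪g, S u⟫ = -⟪P T g, u⟫` for `g ∈ D(T)`, so `D(T) ⊆ D(S*)` and, by `PTP = 0` on `D`,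
`P f ⊥ S u`. Pairing `u + S* S u = S* f` with `u` yields
`‖u‖² + ‖S u‖² = ⟪f, S u⟫ = ⟪(I - P) f, S u⟫ ≤ ‖(I - P) f‖ ‖S u‖`,
and `‖u‖² ≤ a y - y² ≤ a² / 4` for `a = ‖(I - P) f‖`, `y = ‖S u‖`.
-/

open LinearPMap

/-- The composition `T ∘ L` of an unbounded operator `T` with an everywhere-defined bounded
operator `L`, with domain `{f | L f ∈ D(T)}`. -/
noncomputable def pmapCompCLM {H : Type*} [NormedAddCommGroup H] [InnerProductSpace ℝ H]
    (T : H →ₗ.[ℝ] H) (L : H →L[ℝ] H) : H →ₗ.[ℝ] H where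
  domain := T.domain.comap (L : H →ₗ[ℝ] H)
  toFun :=
    { toFun := fun f => T ⟨L f.1, f.2⟩
      map_add' := fun x y => by
        have h : (⟨L (x + y).1, (x + y).2⟩ : T.domain)
            = ⟨L x.1, x.2⟩ + ⟨L y.1, y.2⟩ := Subtype.ext (by simp)
        show T ⟨L (x + y).1, (x + y).2⟩ = T ⟨L x.1, x.2⟩ + T ⟨L y.1, y.2⟩
        rw [h, T.map_add]
      map_smul' := fun c x => by
        have h : (⟨L (c • x).1, (c • x).2⟩ : T.domain)
            = c • (⟨L x.1, x.2⟩ : T.domain) := Subtype.ext (by simp)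
        show T ⟨L (c • x).1, (c • x).2⟩ = c • T ⟨L x.1, x.2⟩
        rw [h, T.map_smul] }

open RealInnerProductSpace

theorem le_half_of_sq_add_sq_le_mul {x y a : ℝ} (ha : 0 ≤ a)
    (h : x ^ 2 + y ^ 2 ≤ a * y) : x ≤ a / 2 := by
  nlinarith [sq_nonneg (y - a / 2), sq_nonneg (x + a / 2)]

section AdjointEnergy

variable {H : Type*} [NormedAddCommGroup H] [InnerProductSpace ℝ H] [CompleteSpace H]
  {S : H →ₗ.[ℝ] H}

theorem norm_sq_add_norm_sq_eq_inner_of_add_adjoint_eq (hS : Dense (S.domain : Set H))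
    (g : S.adjoint.domain) (u : S.domain) (hSu : S u ∈ S.adjoint.domain)
    (heq : (u : H) + S.adjoint ⟨S u, hSu⟩ = S.adjoint g) :
    ‖(u : H)‖ ^ 2 + ‖S u‖ ^ 2 = ⟪(g : H), S u⟫ := by
  have hformal := LinearPMap.adjoint_isFormalAdjoint hS
  calc ‖(u : H)‖ ^ 2 + ‖S u‖ ^ 2 = ⟪(u : H) + S.adjoint ⟨S u, hSu⟩, u⟫ := by
        rw [inner_add_left, hformal, real_inner_self_eq_norm_sq,
          real_inner_self_eq_norm_sq]
    _ = ⟪(g : H), S u⟫ := by rw [heq, hformal]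

end AdjointEnergy

section CompProjection

variable {H : Type*} [NormedAddCommGroup H] [InnerProductSpace ℝ H]
  {T : H →ₗ.[ℝ] H} {P : H →L[ℝ] H}

theorem pmapCompCLM_apply (x : (pmapCompCLM T P).domain) :
    pmapCompCLM T P x = T ⟨P x, x.2⟩ :=
  rfl

theorem inner_pmapCompCLM_right
    (hanti : ∀ f g : T.domain, ⟪T f, (g : H)⟫ = -⟪(f : H), T g⟫)
    (hPsym : ∀ x y : H, ⟪P x, y⟫ = ⟪x, P y⟫) (g : T.domain) (u : (pmapCompCLM T P).domain) :
    ⟪(g : H), pmapCompCLM T P u⟫ = -⟪P (T g), u⟫ := by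
  rw [pmapCompCLM_apply, hPsym, ← neg_neg ⟪(g : H), _⟫, ← hanti g ⟨P u, u.2⟩]

theorem mem_adjoint_domain_pmapCompCLM
    (hanti : ∀ f g : T.domain, ⟪T f, (g : H)⟫ = -⟪(f : H), T g⟫)
    (hPsym : ∀ x y : H, ⟪P x, y⟫ = ⟪x, P y⟫) [CompleteSpace H] (g : T.domain) :
    (g : H) ∈ (pmapCompCLM T P).adjoint.domain :=
  LinearPMap.mem_adjoint_domain_of_exists _
    ⟨-P (T g), fun u => by rw [inner_pmapCompCLM_right hanti hPsym, inner_neg_left]⟩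

end CompProjection

theorem stmt4_general {H : Type*} [NormedAddCommGroup H] [InnerProductSpace ℝ H] [CompleteSpace H]
    (T : H →ₗ.[ℝ] H)
    (hanti : ∀ f g : T.domain, ⟪T f, (g : H)⟫ = -⟪(f : H), T g⟫)
    (P : H →L[ℝ] H)
    (hPsym : ∀ x y : H, ⟪P x, y⟫ = ⟪x, P y⟫)
    (D : Submodule ℝ H) (hDT : D ≤ T.domain) (hDdense : Dense (D : Set H))
    (hPD : ∀ f (hf : f ∈ D), P f ∈ T.domain)
    (hPTP : ∀ f (hf : f ∈ D), P (T ⟨P f, hPD f hf⟩) = 0)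
    (B : H → H)
    (hB : ∀ f (hf : f ∈ (pmapCompCLM T P).adjoint.domain),
      ∃ (h1 : B f ∈ (pmapCompCLM T P).domain)
        (h2 : (pmapCompCLM T P) ⟨B f, h1⟩ ∈ (pmapCompCLM T P).adjoint.domain),
        B f + (pmapCompCLM T P).adjoint ⟨(pmapCompCLM T P) ⟨B f, h1⟩, h2⟩
          = (pmapCompCLM T P).adjoint ⟨f, hf⟩) :
    ∀ f ∈ D, ‖B f‖ ≤ (1 / 2) * ‖f - P f‖ := by
  intro f hf
  set S := pmapCompCLM T P
  have hSdense : Dense (S.domain : Set H) := hDdense.mono fun g hg => hPD g hg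
  have hfS : f ∈ S.adjoint.domain := mem_adjoint_domain_pmapCompCLM hanti hPsym ⟨f, hDT hf⟩
  obtain ⟨hu, hSu, heq⟩ := hB f hfS
  set u : S.domain := ⟨B f, hu⟩
  have henergy := norm_sq_add_norm_sq_eq_inner_of_add_adjoint_eq hSdense ⟨f, hfS⟩ u hSu heq
  have hPf : ⟪P f, S u⟫ = 0 := by
    rw [inner_pmapCompCLM_right hanti hPsym ⟨P f, hPD f hf⟩, hPTP f hf, inner_zero_left, neg_zero]
  have hbound : ‖B f‖ ^ 2 + ‖S u‖ ^ 2 ≤ ‖f - P f‖ * ‖S u‖ :=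
    calc ‖B f‖ ^ 2 + ‖S u‖ ^ 2 = ⟪f - P f, S u⟫ := by
          rw [henergy, inner_sub_left, hPf, sub_zero]
      _ ≤ ‖f - P f‖ * ‖S u‖ := real_inner_le_norm _ _
  exact (le_half_of_sq_add_sq_le_mul (norm_nonneg _) hbound).trans_eq (by ring)

/-- With `T` closed antisymmetric, `P` an orthogonal projection, `D ⊆ D(T)` dense with
`P(D) ⊆ D(T)` and `PTP = 0` on `D`, the operator `B = (I + (TP)*TP)⁻¹ (TP)*`
(characterized on `D((TP)*)` by `Bf + (TP)*(TP(Bf)) = (TP)* f`) satisfies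
`‖Bf‖ ≤ (1/2)‖(I - P)f‖` for all `f ∈ D`. -/
theorem stmt4 {H : Type*} [NormedAddCommGroup H] [InnerProductSpace ℝ H] [CompleteSpace H]
    (T : H →ₗ.[ℝ] H) (hdense : Dense (T.domain : Set H)) (hclosed : T.IsClosed)
    (hanti : ∀ f g : T.domain, ⟪T f, (g : H)⟫ = -⟪(f : H), T g⟫)
    (P : H →L[ℝ] H) (hProj : ∀ x, P (P x) = P x)
    (hPsym : ∀ x y : H, ⟪P x, y⟫ = ⟪x, P y⟫)
    (D : Submodule ℝ H) (hDT : D ≤ T.domain) (hDdense : Dense (D : Set H))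
    (hPD : ∀ f (hf : f ∈ D), P f ∈ T.domain)
    (hPTP : ∀ f (hf : f ∈ D), P (T ⟨P f, hPD f hf⟩) = 0)
    (B : H → H)
    (hB : ∀ f (hf : f ∈ (pmapCompCLM T P).adjoint.domain),
      ∃ (h1 : B f ∈ (pmapCompCLM T P).domain)
        (h2 : (pmapCompCLM T P) ⟨B f, h1⟩ ∈ (pmapCompCLM T P).adjoint.domain),
        B f + (pmapCompCLM T P).adjoint ⟨(pmapCompCLM T P) ⟨B f, h1⟩, h2⟩
          = (pmapCompCLM T P).adjoint ⟨f, hf⟩) :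
    ∀ f ∈ D, ‖B f‖ ≤ (1 / 2) * ‖f - P f‖ :=
  stmt4_general T hanti P hPsym D hDT hDdense hPD hPTP B hB
end

section
/- Let (K, D) be an essentially m-dissipative operator on a Hilbert space H and let (T, D) be dissipative on the same domain. Suppose there exist constants c₁ ∈ ℝ and c₂ ≥ 0 such that ‖Tf‖² ≤ c₁(Kf, f)_H + c₂‖f‖² for all f ∈ D. Then (K + T, D) is essentially m-dissipative on H. -/
/-!
Method of continuity along `K + s • T`, `0 ≤ s ≤ 1`. Dissipativity of `K` and `T` gives, for every
`s ≥ 0`, `‖f‖² - 2⟪Kf, f⟫ ≤ ‖(1 - K - sT)f‖²`, so the hypothesis on `T` turns into the relative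
bound `‖Tf‖ ≤ M ‖(1 - K - sT)f‖` with `M = √(|c₁| + c₂)` independent of `s`. A perturbation that is
relatively bounded with constant `< 1` preserves density of the range (Riesz's lemma), so density
of the range of `1 - K - sT` propagates from `s = 0` in steps of length `1 / (M + 1)` up to `s = 1`.
-/

open RealInnerProductSpace

theorem LinearMap.denseRange_of_norm_sub_le {V E : Type*} [AddCommGroup V] [Module ℝ V]
    [NormedAddCommGroup E] [NormedSpace ℝ E] {A C : V →ₗ[ℝ] E} (hA : DenseRange A) {q : ℝ}
    (hq₀ : 0 ≤ q) (hq₁ : q < 1) (hAC : ∀ v, ‖A v - C v‖ ≤ q * ‖A v‖) : DenseRange C := by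
  -- A Riesz vector for the closure of `range C` is far from `range C`, hence also from `range A`.
  set S := (LinearMap.range C).topologicalClosure
  change Dense (LinearMap.range C : Set E)
  rw [Submodule.dense_iff_topologicalClosure_eq_top]
  by_contra hS
  obtain ⟨x, hx⟩ : ∃ x, x ∉ S := by simpa [Submodule.eq_top_iff'] using hS
  obtain ⟨x₀, hx₀S, hx₀⟩ :=
    riesz_lemma (r := (1 + q) / 2) (LinearMap.range C).isClosed_topologicalClosure ⟨x, hx⟩
      (by linarith)
  have hx₀pos : 0 < ‖x₀‖ := norm_pos_iff.2 fun h => hx₀S (h ▸ S.zero_mem)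
  obtain ⟨v, hv⟩ := hA.exists_dist_lt x₀ (ε := (1 - q) / (2 * (1 + q)) * ‖x₀‖) (by
    have : 0 < 1 - q := by linarith
    positivity)
  rw [dist_eq_norm] at hv
  have hRiesz := hx₀ (C v) ((LinearMap.range C).le_topologicalClosure ⟨v, rfl⟩)
  have htri : ‖x₀ - C v‖ ≤ ‖x₀ - A v‖ + ‖A v - C v‖ := norm_sub_le_norm_sub_add_norm_sub _ _ _
  have hAv : ‖A v‖ ≤ ‖x₀‖ + ‖x₀ - A v‖ := by
    simpa only [norm_sub_rev] using norm_le_norm_add_norm_sub' (A v) x₀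
  have hsmall : (1 + q) * ‖x₀ - A v‖ < (1 - q) / 2 * ‖x₀‖ := by
    calc (1 + q) * ‖x₀ - A v‖ < (1 + q) * ((1 - q) / (2 * (1 + q)) * ‖x₀‖) := by gcongr
      _ = (1 - q) / 2 * ‖x₀‖ := by field_simp
  nlinarith [hAC v, mul_le_mul_of_nonneg_left hAv hq₀]

theorem Real.forall_nonneg_of_step {p : ℝ → Prop} {r : ℝ} (hr : 0 < r) (h₀ : p 0)
    (hstep : ∀ s t, 0 ≤ s → s ≤ t → t ≤ s + r → p s → p t) : ∀ t, 0 ≤ t → p t := by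
  have hn : ∀ n : ℕ, ∀ t, 0 ≤ t → t ≤ n * r → p t := by
    intro n
    induction n with
    | zero =>
      intro t ht₀ ht
      rwa [show t = 0 by simp at ht; linarith]
    | succ n ih =>
      intro t ht₀ ht
      rcases le_or_gt t (n * r) with hle | hgt
      · exact ih t ht₀ hle
      · exact hstep _ t (by positivity) hgt.le (by push_cast at ht; linarith)
          (ih _ (by positivity) le_rfl)
  intro t ht
  obtain ⟨n, hn'⟩ := exists_nat_ge (t / r)
  exact hn n t ht (by rwa [div_le_iff₀ hr] at hn')

section Dissipative

variable {H : Type*} [NormedAddCommGroup H] [InnerProductSpace ℝ H]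

theorem norm_sq_sub_two_inner_le_norm_sub_add_sq {x y z : H} (hz : ⟪z, x⟫ ≤ 0) :
    ‖x‖ ^ 2 - 2 * ⟪y, x⟫ ≤ ‖x - (y + z)‖ ^ 2 := by
  rw [norm_sub_sq_real, inner_add_right, real_inner_comm y x, real_inner_comm z x]
  nlinarith [sq_nonneg ‖y + z‖]

theorem norm_le_sqrt_mul_norm_sub_add_smul {x y w : H} {c₁ c₂ s : ℝ} (hc₂ : 0 ≤ c₂)
    (hs : 0 ≤ s) (hy : ⟪y, x⟫ ≤ 0) (hw : ⟪w, x⟫ ≤ 0)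
    (hbound : ‖w‖ ^ 2 ≤ c₁ * ⟪y, x⟫ + c₂ * ‖x‖ ^ 2) :
    ‖w‖ ≤ √(|c₁| + c₂) * ‖x - (y + s • w)‖ := by
  have hsw : ⟪s • w, x⟫ ≤ 0 := by
    rw [real_inner_smul_left]; exact mul_nonpos_of_nonneg_of_nonpos hs hw
  have hgraph := norm_sq_sub_two_inner_le_norm_sub_add_sq (y := y) hsw
  have hc₁ : c₁ * ⟪y, x⟫ ≤ |c₁| * -⟪y, x⟫ := by
    nlinarith [neg_le_abs c₁]
  rw [← sq_le_sq₀ (norm_nonneg w) (by positivity), mul_pow, Real.sq_sqrt (by positivity)]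
  nlinarith [abs_nonneg c₁, sq_nonneg ‖x‖, mul_le_mul_of_nonneg_left hgraph (abs_nonneg c₁),
    mul_le_mul_of_nonneg_left hgraph hc₂]

variable {D : Submodule ℝ H} {K T : D →ₗ[ℝ] H} {c₁ c₂ : ℝ}

theorem denseRange_sub_add_smul_of_le (hKdiss : ∀ f : D, ⟪K f, (f : H)⟫ ≤ 0)
    (hTdiss : ∀ f : D, ⟪T f, (f : H)⟫ ≤ 0) (hc₂ : 0 ≤ c₂)
    (hbound : ∀ f : D, ‖T f‖ ^ 2 ≤ c₁ * ⟪K f, (f : H)⟫ + c₂ * ‖(f : H)‖ ^ 2)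
    {s t : ℝ} (hs : 0 ≤ s) (hst : s ≤ t) (hts : t ≤ s + 1 / (√(|c₁| + c₂) + 1))
    (hdense : DenseRange (D.subtype - (K + s • T))) :
    DenseRange (D.subtype - (K + t • T)) := by
  set M := √(|c₁| + c₂)
  have hts₀ : 0 ≤ t - s := sub_nonneg.2 hst
  have hq₁ : (t - s) * M < 1 :=
    calc (t - s) * M ≤ 1 / (M + 1) * M := by gcongr; linarith
      _ < 1 := by rw [div_mul_eq_mul_div, one_mul, div_lt_one (by positivity)]; linarith
  refine LinearMap.denseRange_of_norm_sub_le hdense (by positivity) hq₁ fun f => ?_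
  have hdiff : (D.subtype - (K + s • T)) f - (D.subtype - (K + t • T)) f = (t - s) • T f := by
    simp only [LinearMap.sub_apply, LinearMap.add_apply, LinearMap.smul_apply, sub_smul]
    abel
  have hTf : ‖T f‖ ≤ M * ‖(D.subtype - (K + s • T)) f‖ :=
    norm_le_sqrt_mul_norm_sub_add_smul hc₂ hs (hKdiss f) (hTdiss f) (hbound f)
  rw [hdiff, norm_smul, Real.norm_of_nonneg hts₀, mul_assoc]
  exact mul_le_mul_of_nonneg_left hTf hts₀

end Dissipative

theorem stmt16_general {H : Type*} [NormedAddCommGroup H] [InnerProductSpace ℝ H]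
    (D : Submodule ℝ H)
    (K T : D →ₗ[ℝ] H)
    (hKdiss : ∀ f : D, ⟪K f, (f : H)⟫ ≤ 0)
    (hKrange : Dense (Set.range fun f : D => (f : H) - K f))
    (hTdiss : ∀ f : D, ⟪T f, (f : H)⟫ ≤ 0)
    (c₁ c₂ : ℝ) (hc₂ : 0 ≤ c₂)
    (hbound : ∀ f : D, ‖T f‖ ^ 2 ≤ c₁ * ⟪K f, (f : H)⟫ + c₂ * ‖(f : H)‖ ^ 2) :
    (∀ f : D, ⟪K f + T f, (f : H)⟫ ≤ 0) ∧
      Dense (Set.range fun f : D => (f : H) - (K f + T f)) := by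
  refine ⟨fun f => by simpa only [inner_add_left] using add_nonpos (hKdiss f) (hTdiss f), ?_⟩
  have h₀ : DenseRange (D.subtype - (K + (0 : ℝ) • T)) := by
    change Dense (Set.range fun f : D => (f : H) - (K f + (0 : ℝ) • T f))
    simpa using hKrange
  have h₁ : DenseRange (D.subtype - (K + (1 : ℝ) • T)) :=
    Real.forall_nonneg_of_step (p := fun s => DenseRange (D.subtype - (K + s • T)))
      (by positivity) h₀
      (fun _ _ hs hst hts => denseRange_sub_add_smul_of_le hKdiss hTdiss hc₂ hbound hs hst hts)
      1 zero_le_one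
  change Dense (Set.range fun f : D => (f : H) - (K f + (1 : ℝ) • T f)) at h₁
  simpa using h₁

/-- Kato-type perturbation: if `(K, D)` is essentially m-dissipative (dissipative with
`(1 - K)(D)` dense), `(T, D)` is dissipative, and `‖Tf‖² ≤ c₁(Kf, f) + c₂‖f‖²` on `D`,
then `(K + T, D)` is essentially m-dissipative. -/
theorem stmt16 {H : Type*} [NormedAddCommGroup H] [InnerProductSpace ℝ H] [CompleteSpace H]
    (D : Submodule ℝ H) (hDdense : Dense (D : Set H))
    (K T : D →ₗ[ℝ] H)
    (hKdiss : ∀ f : D, ⟪K f, (f : H)⟫ ≤ 0)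
    (hKrange : Dense (Set.range fun f : D => (f : H) - K f))
    (hTdiss : ∀ f : D, ⟪T f, (f : H)⟫ ≤ 0)
    (c₁ c₂ : ℝ) (hc₂ : 0 ≤ c₂)
    (hbound : ∀ f : D, ‖T f‖ ^ 2 ≤ c₁ * ⟪K f, (f : H)⟫ + c₂ * ‖(f : H)‖ ^ 2) :
    (∀ f : D, ⟪K f + T f, (f : H)⟫ ≤ 0) ∧
      Dense (Set.range fun f : D => (f : H) - (K f + T f)) :=
  stmt16_general D K T hKdiss hKrange hTdiss c₁ c₂ hc₂ hbound
end
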